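/- Domination of lower-order by higher-order discrete Sobolev energies: for m ≥ 1, c ∈ R^{d×n}_* and h ∈ (ℝ^d)^n, ġ^m_c(h,h) ≤ (1/4) ġ^{m+1}_c(h,h). -/

import Mathlib

open scoped BigOperators
open Finset

noncomputable section

variable {d n : ℕ}

/-- The `i`-th edge of a discrete closed curve. -/
def edge (c : ZMod n → EuclideanSpace ℝ (Fin d)) (i : ZMod n) : EuclideanSpace ℝ (Fin d) :=
  c (i + 1) - c i

/-- The averaged vertex weight `μ_i = (|e_i| + |e_{i-1}|)/2`. -/
def mu (c : ZMod n → EuclideanSpace ℝ (Fin d)) (i : ZMod n) : ℝ :=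
  (‖edge c i‖ + ‖edge c (i - 1)‖) / 2

/-- The total length `ℓ(c) = Σ_i |e_i|`. -/
def len [NeZero n] (c : ZMod n → EuclideanSpace ℝ (Fin d)) : ℝ :=
  ∑ i : ZMod n, ‖edge c i‖

/-- Discrete arc-length derivative `D_s^m h`. -/
def Ds (c : ZMod n → EuclideanSpace ℝ (Fin d)) :
    ℕ → (ZMod n → EuclideanSpace ℝ (Fin d)) → ZMod n → EuclideanSpace ℝ (Fin d)
  | 0, h => h
  | (j + 1), h => fun i =>
      if Even j then (‖edge c i‖)⁻¹ • (Ds c j h (i + 1) - Ds c j h i)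
      else (mu c i)⁻¹ • (Ds c j h i - Ds c j h (i - 1))

/-- The weight `μ_{i,m}`: `μ_i` for even `m`, `|e_i|` for odd `m`. -/
def muM (c : ZMod n → EuclideanSpace ℝ (Fin d)) (m : ℕ) (i : ZMod n) : ℝ :=
  if Even m then mu c i else ‖edge c i‖

/-- The homogeneous discrete Sobolev energy `ġ^m_c(h,k)`. -/
def gdot [NeZero n] (c : ZMod n → EuclideanSpace ℝ (Fin d)) (m : ℕ)
    (h k : ZMod n → EuclideanSpace ℝ (Fin d)) : ℝ :=
  ∑ i : ZMod n, (len c) ^ (2 * (m : ℤ) - 3) *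
    (inner ℝ (Ds c m h i) (Ds c m k i) : ℝ) * muM c m i

/-- The discrete Sobolev metric `g^m_c(h,k) = ġ^0_c(h,k) + ġ^m_c(h,k)`. -/
def gm [NeZero n] (c : ZMod n → EuclideanSpace ℝ (Fin d)) (m : ℕ)
    (h k : ZMod n → EuclideanSpace ℝ (Fin d)) : ℝ :=
  gdot c 0 h k + gdot c m h k

end

/-
Write `u = D_s^m h`. For `m ≥ 1` it has weighted mean zero, `Σ μ_{i,m} u_i = 0`, because
`μ_{i,m} D_s^m h_i` is a difference of consecutive values of `D_s^{m-1} h` and telescopes around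
the cycle. Hence `ℓ u_i = Σ_j μ_{j,m} (u_i - u_j)`, and each `|u_i - u_j|` is at most half the
total variation `S = Σ_i |u_{i+1} - u_i|` (go around the cycle either way), so `|u_i| ≤ S/2`.
The total variation is `S = Σ_i μ_{i,m+1} |D_s^{m+1} h_i|`, so Cauchy–Schwarz against the weights
`μ_{i,m+1}`, which sum to `ℓ`, gives `S² ≤ ℓ Σ_i μ_{i,m+1} |D_s^{m+1} h_i|²`. Altogether
`Σ_i μ_{i,m} |u_i|² ≤ ℓ S²/4 ≤ (ℓ²/4) Σ_i μ_{i,m+1} |D_s^{m+1} h_i|²`, and the factor `ℓ²`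
is exactly the ratio of the length prefactors of `ġ^{m+1}` and `ġ^m`.
-/

open Finset

section Cycle

variable {n : ℕ} [NeZero n] {M E : Type*}

theorem ZMod.sum_range_natCast [AddCommMonoid M] (g : ZMod n → M) :
    ∑ t ∈ range n, g t = ∑ p, g p := by
  refine sum_nbij (↑) (fun _ _ => mem_univ _) (fun a ha b hb hab => ?_)
    (fun p _ => ⟨p.val, mem_coe.mpr (mem_range.mpr (ZMod.val_lt p)), ZMod.natCast_zmod_val p⟩)
    (fun _ _ => rfl)
  simpa [ZMod.val_cast_of_lt (mem_range.mp ha), ZMod.val_cast_of_lt (mem_range.mp hb)]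
    using congrArg ZMod.val hab

theorem ZMod.sum_sub_succ_eq_zero [AddCommGroup M] (v : ZMod n → M) :
    ∑ i, (v (i + 1) - v i) = 0 := by
  rw [sum_sub_distrib, sub_eq_zero]
  exact Equiv.sum_comp (Equiv.addRight 1) v

theorem ZMod.two_mul_norm_sub_le_sum_norm_sub [SeminormedAddCommGroup E] (u : ZMod n → E)
    (i j : ZMod n) : 2 * ‖u i - u j‖ ≤ ∑ p, ‖u (p + 1) - u p‖ := by
  let f : ℕ → E := fun t => u (j + t)
  set k := (i - j).val
  have hk : k ≤ n := (ZMod.val_lt _).le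
  have hfk : f k = u i := by simp [f, k]
  have hfn : f n = u j := by simp [f]
  have hf0 : f 0 = u j := by simp [f]
  have hforward : ‖u i - u j‖ ≤ ∑ t ∈ range k, ‖f (t + 1) - f t‖ := by
    rw [← hfk, ← hf0, ← sum_range_sub f k]
    exact norm_sum_le _ _
  have hbackward : ‖u i - u j‖ ≤ ∑ t ∈ Ico k n, ‖f (t + 1) - f t‖ := by
    rw [← norm_neg, neg_sub, ← hfk, ← hfn, ← sum_Ico_sub f hk]
    exact norm_sum_le _ _
  have hfull : ∑ t ∈ range n, ‖f (t + 1) - f t‖ = ∑ p, ‖u (p + 1) - u p‖ := by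
    simp only [f, Nat.cast_succ, ← add_assoc]
    rw [ZMod.sum_range_natCast (fun q => ‖u (j + q + 1) - u (j + q)‖)]
    exact Equiv.sum_comp (Equiv.addLeft j) fun q => ‖u (q + 1) - u q‖
  rw [← hfull, ← sum_range_add_sum_Ico _ hk]
  linarith

end Cycle

theorem norm_le_of_sum_smul_eq_zero {ι E : Type*} [Fintype ι] [SeminormedAddCommGroup E]
    [NormedSpace ℝ E] {w : ι → ℝ} {u : ι → E} (hw : ∀ j, 0 ≤ w j) (hpos : 0 < ∑ j, w j)
    (hmean : ∑ j, w j • u j = 0) {B : ℝ} (i : ι) (hB : ∀ j, ‖u i - u j‖ ≤ B) : ‖u i‖ ≤ B := by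
  have hcentered : (∑ j, w j) • u i = ∑ j, w j • (u i - u j) := by
    simp only [smul_sub, sum_sub_distrib, hmean, sub_zero, sum_smul]
  refine le_of_mul_le_mul_left ?_ hpos
  calc (∑ j, w j) * ‖u i‖ = ‖∑ j, w j • (u i - u j)‖ := by
        rw [← hcentered, norm_smul, Real.norm_of_nonneg hpos.le]
    _ ≤ ∑ j, w j * ‖u i - u j‖ := by
        refine (norm_sum_le _ _).trans_eq (sum_congr rfl fun j _ => ?_)
        rw [norm_smul, Real.norm_of_nonneg (hw j)]
    _ ≤ ∑ j, w j * B := by gcongr with j; exacts [hw j, hB j]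
    _ = (∑ j, w j) * B := by rw [sum_mul]

theorem ZMod.sum_mul_norm_sq_le_of_sum_smul_eq_zero {n : ℕ} [NeZero n] {E : Type*}
    [SeminormedAddCommGroup E] [NormedSpace ℝ E] {w : ZMod n → ℝ} {u : ZMod n → E}
    (hw : ∀ i, 0 < w i) (hmean : ∑ i, w i • u i = 0) :
    ∑ i, w i * ‖u i‖ ^ 2 ≤ (∑ i, w i) / 4 * (∑ p, ‖u (p + 1) - u p‖) ^ 2 := by
  set S := ∑ p, ‖u (p + 1) - u p‖
  have hpos : 0 < ∑ i, w i := sum_pos (fun i _ => hw i) univ_nonempty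
  have hbound : ∀ i, ‖u i‖ ≤ S / 2 := fun i =>
    norm_le_of_sum_smul_eq_zero (fun j => (hw j).le) hpos hmean i fun j => by
      linarith [ZMod.two_mul_norm_sub_le_sum_norm_sub u i j]
  calc ∑ i, w i * ‖u i‖ ^ 2 ≤ ∑ i, w i * (S / 2) ^ 2 := by
        gcongr with i
        · exact (hw i).le
        · exact hbound i
    _ = (∑ i, w i) / 4 * S ^ 2 := by rw [← sum_mul]; ring

section DiscreteCurve

variable {d n : ℕ} {c : ZMod n → EuclideanSpace ℝ (Fin d)}

theorem edge_ne_zero (hc : ∀ i, c i ≠ c (i + 1)) (i : ZMod n) : edge c i ≠ 0 :=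
  sub_ne_zero.mpr (hc i).symm

theorem muM_pos (hc : ∀ i, edge c i ≠ 0) (m : ℕ) (i : ZMod n) : 0 < muM c m i := by
  have hpos : ∀ j, 0 < ‖edge c j‖ := fun j => norm_pos_iff.mpr (hc j)
  unfold muM mu
  split_ifs
  · linarith [hpos i, hpos (i - 1)]
  · exact hpos i

theorem muM_succ_smul_Ds_succ (hc : ∀ i, edge c i ≠ 0) (h : ZMod n → EuclideanSpace ℝ (Fin d))
    (m : ℕ) (i : ZMod n) :
    muM c (m + 1) i • Ds c (m + 1) h i =
      if Even m then Ds c m h (i + 1) - Ds c m h i else Ds c m h i - Ds c m h (i - 1) := by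
  have hne := (muM_pos hc (m + 1) i).ne'
  by_cases hm : Even m
  · have hodd : ¬Even (m + 1) := Nat.not_even_iff_odd.mpr hm.add_one
    simp only [muM, if_neg hodd] at hne
    simp only [muM, Ds, if_neg hodd, if_pos hm, smul_inv_smul₀ hne]
  · have heven : Even (m + 1) := Nat.even_add_one.mpr hm
    simp only [muM, if_pos heven] at hne
    simp only [muM, Ds, if_pos heven, if_neg hm, smul_inv_smul₀ hne]

variable [NeZero n]

theorem len_pos (hc : ∀ i, edge c i ≠ 0) : 0 < len c :=
  sum_pos (fun i _ => norm_pos_iff.mpr (hc i)) univ_nonempty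

theorem sum_muM_eq_len (c : ZMod n → EuclideanSpace ℝ (Fin d)) (m : ℕ) :
    ∑ i, muM c m i = len c := by
  have hshift : ∑ i, ‖edge c (i - 1)‖ = ∑ i, ‖edge c i‖ :=
    Equiv.sum_comp (Equiv.subRight 1) fun i => ‖edge c i‖
  unfold muM
  split_ifs
  · simp only [mu]
    rw [← sum_div, sum_add_distrib, hshift, len]
    ring
  · rfl

theorem sum_comp_muM_succ_smul_Ds_succ {M : Type*} [AddCommMonoid M] (hc : ∀ i, edge c i ≠ 0)
    (h : ZMod n → EuclideanSpace ℝ (Fin d)) (m : ℕ) (F : EuclideanSpace ℝ (Fin d) → M) :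
    ∑ i, F (muM c (m + 1) i • Ds c (m + 1) h i) = ∑ i, F (Ds c m h (i + 1) - Ds c m h i) := by
  simp only [muM_succ_smul_Ds_succ hc]
  split_ifs
  · rfl
  · have hshift := Equiv.sum_comp (Equiv.subRight 1) fun i => F (Ds c m h (i + 1) - Ds c m h i)
    simpa only [Equiv.subRight_apply, sub_add_cancel] using hshift

theorem sum_muM_smul_Ds_eq_zero (hc : ∀ i, edge c i ≠ 0) (h : ZMod n → EuclideanSpace ℝ (Fin d))
    {m : ℕ} (hm : 1 ≤ m) : ∑ i, muM c m i • Ds c m h i = 0 := by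
  obtain ⟨k, rfl⟩ := Nat.exists_eq_add_of_le' hm
  exact (sum_comp_muM_succ_smul_Ds_succ hc h k id).trans (ZMod.sum_sub_succ_eq_zero _)

theorem sum_norm_sub_Ds (hc : ∀ i, edge c i ≠ 0) (h : ZMod n → EuclideanSpace ℝ (Fin d))
    (m : ℕ) :
    ∑ i, ‖Ds c m h (i + 1) - Ds c m h i‖ = ∑ i, muM c (m + 1) i * ‖Ds c (m + 1) h i‖ := by
  rw [← sum_comp_muM_succ_smul_Ds_succ hc h m norm]
  refine sum_congr rfl fun i _ => ?_
  rw [norm_smul, Real.norm_of_nonneg (muM_pos hc (m + 1) i).le]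

theorem gdot_self (c : ZMod n → EuclideanSpace ℝ (Fin d)) (m : ℕ)
    (h : ZMod n → EuclideanSpace ℝ (Fin d)) :
    gdot c m h h = len c ^ (2 * (m : ℤ) - 3) * ∑ i, muM c m i * ‖Ds c m h i‖ ^ 2 := by
  simp only [gdot, mul_sum, real_inner_self_eq_norm_sq]
  exact sum_congr rfl fun i _ => by ring

end DiscreteCurve

theorem stmt_12_general (d n m : ℕ) [NeZero n] (hm : 1 ≤ m)
    (c : ZMod n → EuclideanSpace ℝ (Fin d))
    (hc : ∀ i : ZMod n, c i ≠ c (i + 1))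
    (h : ZMod n → EuclideanSpace ℝ (Fin d)) :
    gdot c m h h ≤ (1 / 4) * gdot c (m + 1) h h := by
  have he := edge_ne_zero hc
  have hℓ := len_pos he
  set ℓ := len c with hℓdef
  set w := muM c (m + 1)
  set D := Ds c (m + 1) h
  have hpoincare : ∑ i, muM c m i * ‖Ds c m h i‖ ^ 2 ≤ ℓ / 4 * (∑ i, w i * ‖D i‖) ^ 2 := by
    rw [← sum_norm_sub_Ds he, hℓdef, ← sum_muM_eq_len c m]
    exact ZMod.sum_mul_norm_sq_le_of_sum_smul_eq_zero (muM_pos he m)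
      (sum_muM_smul_Ds_eq_zero he h hm)
  have hcauchySchwarz : (∑ i, w i * ‖D i‖) ^ 2 ≤ ℓ * ∑ i, w i * ‖D i‖ ^ 2 := by
    rw [hℓdef, ← sum_muM_eq_len c (m + 1)]
    refine sum_sq_le_sum_mul_sum_of_sq_le_mul _ (fun i _ => (muM_pos he _ i).le)
      (fun i _ => mul_nonneg (muM_pos he _ i).le (sq_nonneg _)) fun i _ => le_of_eq (by ring)
  have hexp : ℓ ^ (2 * ((m + 1 : ℕ) : ℤ) - 3) = ℓ ^ (2 * (m : ℤ) - 3) * ℓ ^ 2 := by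
    rw [← zpow_natCast, ← zpow_add₀ hℓ.ne']
    congr 1
    push_cast
    ring
  rw [gdot_self, gdot_self, hexp]
  calc ℓ ^ (2 * (m : ℤ) - 3) * ∑ i, muM c m i * ‖Ds c m h i‖ ^ 2
      ≤ ℓ ^ (2 * (m : ℤ) - 3) * (ℓ / 4 * (ℓ * ∑ i, w i * ‖D i‖ ^ 2)) := by
        gcongr
        exact hpoincare.trans (by gcongr)
    _ = 1 / 4 * (ℓ ^ (2 * (m : ℤ) - 3) * ℓ ^ 2 * ∑ i, w i * ‖D i‖ ^ 2) := by ring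

/-- The lower-order discrete Sobolev energy is dominated by a quarter of the
next higher-order one. -/
theorem stmt_12 (d n m : ℕ) [NeZero n] (hn : 3 ≤ n) (hm : 1 ≤ m)
    (c : ZMod n → EuclideanSpace ℝ (Fin d))
    (hc : ∀ i : ZMod n, c i ≠ c (i + 1))
    (h : ZMod n → EuclideanSpace ℝ (Fin d)) :
    gdot c m h h ≤ (1 / 4) * gdot c (m + 1) h h :=
  stmt_12_general d n m hm c hc h
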